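/- Fix integers n ≥ 1, m ≥ 1, with finite S ⊂ R^n. Then C(S, n, m, 1) ≤ C(S)·m + max_V C(V), where the maximum is over all subsets V ⊆ {0,1}^m with |V| ≤ |S|; consequently, if n, m ≥ 4 then C(S,n,m,1) ≤ 2·C(S)·m. -/

import Mathlib

/-- The dot product on `Fin n → ℝ`. -/
noncomputable def dot {n : ℕ} (a x : Fin n → ℝ) : ℝ := ∑ i, a i * x i

/-- The set of threshold functions on `S`. -/
def thrFun {n : ℕ} (S : Set (Fin n → ℝ)) : Set (S → Bool) :=
  {f | ∃ a : Fin n → ℝ, ∃ α : ℝ, ∀ x : S, (f x = true ↔ 0 ≤ dot a (x : Fin n → ℝ) + α)}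

/-- The capacity of `S`. -/
noncomputable def Cap {n : ℕ} (S : Set (Fin n → ℝ)) : ℝ :=
  Real.logb 2 (Nat.card ↥(thrFun S))

/-- The Boolean cube `{0,1}^n` viewed inside `ℝ^n`. -/
def cube (n : ℕ) : Set (Fin n → ℝ) := {x | ∀ i, x i = 0 ∨ x i = 1}

open Finset

-- dot is linear in each argument
lemma dot_add_right {q : ℕ} (b x y : Fin q → ℝ) : dot b (x + y) = dot b x + dot b y := by
  simp [dot, mul_add, Finset.sum_add_distrib]

lemma dot_smul_right {q : ℕ} (b : Fin q → ℝ) (c : ℝ) (x : Fin q → ℝ) :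
    dot b (c • x) = c * dot b x := by
  simp only [dot, Pi.smul_apply, smul_eq_mul, Finset.mul_sum]
  exact Finset.sum_congr rfl fun i _ => by ring

lemma dot_isLinear {q : ℕ} (b : Fin q → ℝ) : IsLinearMap ℝ (fun v => dot b v) :=
  ⟨dot_add_right b, fun c x => dot_smul_right b c x⟩

lemma dot_neg_left {q : ℕ} (a x : Fin q → ℝ) : dot (-a) x = - dot a x := by
  simp [dot, neg_mul]

lemma dot_zero_left {q : ℕ} (x : Fin q → ℝ) : dot 0 x = 0 := by simp [dot]

/-- `a ↦ dot a d` as a linear map. -/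
noncomputable def dualDot {q : ℕ} (d : Fin q → ℝ) : (Fin q → ℝ) →ₗ[ℝ] ℝ where
  toFun a := dot a d
  map_add' x y := by simp [dot, add_mul, Finset.sum_add_distrib]
  map_smul' c x := by
    simp only [dot, Pi.smul_apply, smul_eq_mul, RingHom.id_apply, Finset.mul_sum]
    exact Finset.sum_congr rfl fun i _ => by ring

lemma dualDot_ne_zero {q : ℕ} {d : Fin q → ℝ} (hd : d ≠ 0) : dualDot d ≠ 0 := by
  obtain ⟨j, hj⟩ := Function.ne_iff.1 hd
  intro h
  apply hj
  have := congrArg (fun f => f (Pi.single j 1)) (congrArg (fun f => f.toFun) h)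
  simpa [dualDot, dot, Pi.single_apply, ite_mul] using this

lemma exists_generic {q : ℕ} (S : Finset (Fin q → ℝ)) :
    ∃ a : Fin q → ℝ, ∀ x ∈ S, ∀ y ∈ S, x ≠ y → dot a x ≠ dot a y := by
  classical
  set 𝔎 : Finset (Subspace ℝ (Fin q → ℝ)) :=
    (((S ×ˢ S).filter (fun p => p.1 ≠ p.2)).image
      (fun p => LinearMap.ker (dualDot (p.1 - p.2)))) with h𝔎
  have htop : ⊤ ∉ 𝔎 := by
    rw [h𝔎]
    simp only [Finset.mem_image, Finset.mem_filter, not_exists]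
    rintro ⟨x, y⟩ ⟨⟨-, hxy⟩, hker⟩
    exact dualDot_ne_zero (sub_ne_zero.mpr hxy) (LinearMap.ker_eq_top.mp hker)
  have hne := Subspace.biUnion_ne_univ_of_top_notMem htop
  obtain ⟨a, ha⟩ : ∃ a, a ∉ ⋃ p ∈ 𝔎, (p : Set (Fin q → ℝ)) := by
    by_contra h
    push_neg at h
    exact hne (Set.eq_univ_of_forall h)
  refine ⟨a, fun x hx y hy hxy h => ha ?_⟩
  have hmem : LinearMap.ker (dualDot (x - y)) ∈ 𝔎 := by
    rw [h𝔎]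
    exact Finset.mem_image.2 ⟨(x, y),
      Finset.mem_filter.2 ⟨Finset.mem_product.2 ⟨hx, hy⟩, hxy⟩, rfl⟩
  refine Set.mem_biUnion hmem ?_
  simp only [SetLike.mem_coe, LinearMap.mem_ker]
  show dot a (x - y) = 0
  have : dot a (x - y) = dot a x - dot a y := by
    simp [dot, mul_sub, Finset.sum_sub_distrib]
  rw [this, h, sub_self]

lemma thrFun_const_true_mem {q : ℕ} (W : Set (Fin q → ℝ)) :
    (fun _ : W => true) ∈ thrFun W :=
  ⟨0, 0, fun x => by simp [dot_zero_left]⟩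

lemma one_le_card_thrFun {q : ℕ} (W : Set (Fin q → ℝ)) [Finite ↥W] :
    1 ≤ Nat.card ↥(thrFun W) := by
  have : Nonempty ↥(thrFun W) := ⟨⟨_, thrFun_const_true_mem W⟩⟩
  exact Nat.card_pos

lemma card_thrFun_le_two_pow {q : ℕ} (V : Finset (Fin q → ℝ)) :
    Nat.card ↥(thrFun (↑V : Set (Fin q → ℝ))) ≤ 2 ^ V.card := by
  classical
  have h1 : Nat.card ↥(thrFun (↑V : Set (Fin q → ℝ)))
      ≤ Nat.card ((↥(↑V : Set (Fin q → ℝ))) → Bool) :=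
    Nat.card_le_card_of_injective _ Subtype.val_injective
  have h2 : Nat.card ((↥(↑V : Set (Fin q → ℝ))) → Bool) = 2 ^ V.card := by
    rw [Nat.card_eq_fintype_card, Fintype.card_fun, Fintype.card_bool,
      ← Nat.card_eq_fintype_card, Nat.card_coe_set_eq, Set.ncard_coe_finset]
  omega

lemma two_mul_card_le_card_thrFun {q : ℕ} (S : Finset (Fin q → ℝ)) :
    2 * S.card ≤ Nat.card ↥(thrFun (↑S : Set (Fin q → ℝ))) := by
  classical
  obtain ⟨a, ha⟩ := exists_generic S
  set γ := ↥(↑S : Set (Fin q → ℝ)) with hγ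
  have hainj : ∀ s t : γ, s ≠ t → dot a ↑s ≠ dot a ↑t := by
    intro s t hst
    exact ha ↑s s.2 ↑t t.2 (fun h => hst (Subtype.ext h))
  set up : γ → (γ → Bool) := fun s x => decide (dot a ↑s ≤ dot a ↑x) with hup
  set dn : γ → (γ → Bool) := fun s x => decide (dot a ↑x ≤ dot a ↑s) with hdn
  set cf : γ → Bool := fun _ => false with hcf
  have hupmem : ∀ s, up s ∈ thrFun (↑S : Set (Fin q → ℝ)) := by
    intro s
    refine ⟨a, -(dot a ↑s), fun x => ?_⟩
    rw [← sub_eq_add_neg, hup]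
    simp [sub_nonneg]
  have hdnmem : ∀ s, dn s ∈ thrFun (↑S : Set (Fin q → ℝ)) := by
    intro s
    refine ⟨-a, dot a ↑s, fun x => ?_⟩
    rw [dot_neg_left, ← sub_eq_neg_add, hdn]
    simp [sub_nonneg]
  have hcfmem : cf ∈ thrFun (↑S : Set (Fin q → ℝ)) := by
    refine ⟨0, -1, fun x => ?_⟩
    rw [dot_zero_left, hcf]
    norm_num
  have hupinj : Function.Injective up := by
    intro s t h
    by_contra hst
    have h1 := congrFun h s
    have h2 := congrFun h t
    simp only [hup, decide_eq_decide] at h1 h2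
    have := le_antisymm (h2.2 (le_refl _)) (h1.1 (le_refl _))
    exact hainj s t hst this
  have hdninj : Function.Injective dn := by
    intro s t h
    by_contra hst
    have h1 := congrFun h s
    have h2 := congrFun h t
    simp only [hdn, decide_eq_decide] at h1 h2
    have := le_antisymm (h1.1 (le_refl _)) (h2.2 (le_refl _))
    exact hainj s t hst this
  -- if up s = dn t then up s is the constant true function
  have hcap : ∀ s t : γ, up s = dn t → up s = fun _ => true := by
    intro s t h
    funext x
    have hst : dot a ↑s ≤ dot a ↑t := by
      have := congrFun h s
      simp only [hup, hdn, decide_eq_decide] at this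
      exact this.1 (le_refl _)
    by_contra hx
    have hx' : ¬ dot a ↑s ≤ dot a ↑x := by
      simpa [hup] using hx
    have hxt : dot a ↑x ≤ dot a ↑t := le_trans (le_of_not_ge hx') hst
    have := congrFun h x
    simp only [hup, hdn, decide_eq_decide] at this
    exact hx' (by linarith [this.2 hxt])
  haveI : Fintype γ := FinsetCoe.fintype S
  set U : Finset (γ → Bool) := Finset.image up Finset.univ with hU
  set D : Finset (γ → Bool) := Finset.image dn Finset.univ with hD
  have hcardγ : Fintype.card γ = S.card := by
    rw [← Nat.card_eq_fintype_card, Nat.card_coe_set_eq, Set.ncard_coe_finset]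
  have hUcard : U.card = S.card := by
    rw [hU, Finset.card_image_of_injective _ hupinj, Finset.card_univ, hcardγ]
  have hDcard : D.card = S.card := by
    rw [hD, Finset.card_image_of_injective _ hdninj, Finset.card_univ, hcardγ]
  have hUD : (U ∩ D).card ≤ 1 := by
    refine Finset.card_le_one.2 ?_
    intro f hf g hg
    simp only [hU, hD, Finset.mem_inter, Finset.mem_image, Finset.mem_univ, true_and] at hf hg
    obtain ⟨⟨s1, hs1⟩, ⟨t1, ht1⟩⟩ := hf
    obtain ⟨⟨s2, hs2⟩, ⟨t2, ht2⟩⟩ := hg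
    have e1 := hcap s1 t1 (hs1.trans ht1.symm)
    have e2 := hcap s2 t2 (hs2.trans ht2.symm)
    rw [← hs1, e1, ← hs2, e2]
  have hcfnot : cf ∉ U ∪ D := by
    intro hmem
    rcases Finset.mem_union.1 hmem with hmem | hmem <;>
    · simp only [hU, hD, Finset.mem_image, Finset.mem_univ, true_and] at hmem
      obtain ⟨s, hs⟩ := hmem
      have := congrFun hs s
      simp [hup, hdn, hcf] at this
  have hsubset : U ∪ D ∪ {cf} ⊆ (thrFun (↑S : Set (Fin q → ℝ))).toFinset := by
    intro f hf
    rw [Set.mem_toFinset]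
    rcases Finset.mem_union.1 hf with hf | hf
    · rcases Finset.mem_union.1 hf with hf | hf <;>
        simp only [hU, hD, Finset.mem_image, Finset.mem_univ, true_and] at hf
      · obtain ⟨s, rfl⟩ := hf; exact hupmem s
      · obtain ⟨s, rfl⟩ := hf; exact hdnmem s
    · rw [Finset.mem_singleton.1 hf]; exact hcfmem
  have hcount : 2 * S.card ≤ (U ∪ D ∪ {cf}).card := by
    have h1 : (U ∪ D).card + (U ∩ D).card = U.card + D.card :=
      Finset.card_union_add_card_inter U D
    have h2 : (U ∪ D ∪ {cf}).card = (U ∪ D).card + 1 := by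
      rw [Finset.card_union_of_disjoint (Finset.disjoint_singleton_right.2 hcfnot),
        Finset.card_singleton]
    omega
  calc 2 * S.card ≤ (U ∪ D ∪ {cf}).card := hcount
    _ ≤ (thrFun (↑S : Set (Fin q → ℝ))).toFinset.card := Finset.card_le_card hsubset
    _ = Nat.card ↥(thrFun (↑S : Set (Fin q → ℝ))) := by
        rw [Nat.card_coe_set_eq, Set.ncard_eq_toFinset_card']

lemma Iic_eq_range_succ (n : ℕ) : Finset.Iic n = Finset.range (n+1) := by
  ext k; simp [Nat.lt_succ_iff]

lemma sum_choose_le_pow {K : ℕ} (hK : 2 ≤ K) : ∀ d, 2 ≤ d →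
    ∑ k ∈ Finset.Iic d, K.choose k ≤ K ^ d := by
  intro d
  induction d with
  | zero => omega
  | succ d ih =>
    intro hd
    rcases Nat.lt_or_ge d 2 with hd2 | hd2
    · -- d + 1 = 2
      have hd1 : d = 1 := by omega
      subst hd1
      have hch : K.choose 2 * 2 = K * (K - 1) := by
        simpa [Nat.choose_one_right] using Nat.choose_succ_right_eq K 1
      have hsum : ∑ k ∈ Finset.Iic 2, K.choose k = 1 + K + K.choose 2 := by
        rw [Iic_eq_range_succ, Finset.sum_range_succ, Finset.sum_range_succ,
          Finset.sum_range_one, Nat.choose_zero_right, Nat.choose_one_right]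
      rw [hsum]
      obtain ⟨K', rfl⟩ : ∃ K', K = K' + 2 := ⟨K - 2, by omega⟩
      have hK1 : K' + 2 - 1 = K' + 1 := by omega
      rw [hK1] at hch
      have hsq : (K' + 2) ^ (1+1) = (K'+2) * (K'+2) := by ring
      rw [hsq]
      nlinarith [hch]
    · have ih' := ih hd2
      have hsum : ∑ k ∈ Finset.Iic (d+1), K.choose k
          = ∑ k ∈ Finset.Iic d, K.choose k + K.choose (d+1) := by
        rw [Iic_eq_range_succ, Iic_eq_range_succ, Finset.sum_range_succ]
      rw [hsum]
      have hCd : K.choose d ≤ K ^ d :=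
        le_trans (Finset.single_le_sum (f := fun k => K.choose k)
          (fun _ _ => Nat.zero_le _) (Finset.mem_Iic.2 (le_refl d))) ih'
      have hrec : K.choose (d+1) * (d+1) = K.choose d * (K - d) :=
        Nat.choose_succ_right_eq K d
      have h3 : 3 * K.choose (d+1) ≤ K ^ (d+1) := by
        have h1 : 3 * K.choose (d+1) ≤ K.choose (d+1) * (d+1) := by nlinarith
        have h2 : K.choose d * (K - d) ≤ K ^ d * K :=
          Nat.mul_le_mul hCd (by omega)
        rw [pow_succ]
        omega
      have h5 : 2 * K ^ d ≤ K ^ d * K := by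
        calc 2 * K ^ d ≤ K * K ^ d := Nat.mul_le_mul_right _ hK
          _ = K ^ d * K := mul_comm _ _
      refine Nat.le_of_mul_le_mul_left ?_ (show 0 < 6 by norm_num)
      have hps : K ^ (d+1) = K ^ d * K := pow_succ K d
      rw [hps] at h3 ⊢
      linarith

lemma convex_half_ge {q : ℕ} (b : Fin q → ℝ) (β : ℝ) :
    Convex ℝ {v : Fin q → ℝ | 0 ≤ dot b v + β} := by
  have : {v : Fin q → ℝ | 0 ≤ dot b v + β} = {v : Fin q → ℝ | -β ≤ dot b v} := by
    ext v; simp [neg_le_iff_add_nonneg]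
  rw [this]
  exact convex_halfSpace_ge (dot_isLinear b) (-β)

lemma convex_half_lt {q : ℕ} (b : Fin q → ℝ) (β : ℝ) :
    Convex ℝ {v : Fin q → ℝ | dot b v + β < 0} := by
  have : {v : Fin q → ℝ | dot b v + β < 0} = {v : Fin q → ℝ | dot b v < -β} := by
    ext v; constructor <;> intro h <;> simp only [Set.mem_setOf_eq] at * <;> linarith
  rw [this]
  exact convex_halfSpace_lt (dot_isLinear b) (-β)

lemma card_thrFun_le_sauer (m : ℕ) (V : Finset (Fin m → ℝ)) :
    Nat.card ↥(thrFun (↑V : Set (Fin m → ℝ)))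
      ≤ ∑ k ∈ Finset.Iic (m+1), (V.card).choose k := by
  classical
  set γ := ↥(↑V : Set (Fin m → ℝ)) with hγ
  haveI : Fintype γ := FinsetCoe.fintype V
  set toA : (γ → Bool) → Finset γ := fun f => Finset.univ.filter (fun x => f x = true) with htoA
  have htoAinj : Function.Injective toA := by
    intro f g h
    funext x
    have := Finset.ext_iff.1 h x
    simp only [htoA, Finset.mem_filter, Finset.mem_univ, true_and] at this
    by_cases hf : f x = true
    · rw [hf, (this.1 hf).symm]
    · have hg : ¬ g x = true := fun hg => hf (this.2 hg)
      rw [Bool.not_eq_true] at hf hg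
      rw [hf, hg]
  set 𝒜 : Finset (Finset γ) :=
    (Set.toFinite (toA '' thrFun (↑V : Set (Fin m → ℝ)))).toFinset with h𝒜
  -- cardinality identification
  have hcard𝒜 : Nat.card ↥(thrFun (↑V : Set (Fin m → ℝ))) = 𝒜.card := by
    rw [h𝒜, ← Set.ncard_eq_toFinset_card, Set.ncard_image_of_injective _ htoAinj,
      Nat.card_coe_set_eq]
  -- the VC dimension bound
  have hvc : 𝒜.vcDim ≤ m + 1 := by
    rw [Finset.vcDim]
    refine Finset.sup_le ?_
    intro s hs
    by_contra hbig
    push_neg at hbig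
    obtain ⟨s', hs'sub, hs'card⟩ := Finset.exists_subset_card_eq (show m + 2 ≤ s.card by omega)
    have hsh : 𝒜.Shatters s' := (Finset.mem_shatterer.1 hs).mono_right hs'sub
    set q : ↥s' → (Fin m → ℝ) := fun i => (i.1 : Fin m → ℝ) with hq
    have hnai : ¬ AffineIndependent ℝ q := by
      intro hai
      have h1 := hai.card_le_finrank_succ
      rw [Fintype.card_coe, hs'card] at h1
      have h2 : Module.finrank ℝ ↥(vectorSpan ℝ (Set.range q)) ≤ m := by
        refine le_trans (Submodule.finrank_le _) ?_
        rw [Module.finrank_pi, Fintype.card_fin]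
      omega
    obtain ⟨I, p, hpI, hpIc⟩ := Convex.radon_partition hnai
    set t : Finset γ := (Finset.univ.filter (fun i : ↥s' => i ∈ I)).image
      Subtype.val with ht
    have htsub : t ⊆ s' := by
      intro x hx
      rw [ht] at hx
      obtain ⟨i, -, rfl⟩ := Finset.mem_image.1 hx
      exact i.2
    obtain ⟨u, hu𝒜, hsu⟩ := hsh htsub
    rw [h𝒜, Set.Finite.mem_toFinset] at hu𝒜
    obtain ⟨f, hf, rfl⟩ := hu𝒜
    obtain ⟨b, β, hb⟩ := hf
    -- membership dichotomy
    have hmemI : ∀ i : ↥s', i ∈ I → 0 ≤ dot b (q i) + β := by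
      intro i hi
      have hit : i.1 ∈ t := by
        rw [ht]
        exact Finset.mem_image.2 ⟨i, Finset.mem_filter.2 ⟨Finset.mem_univ _, hi⟩, rfl⟩
      rw [← hsu] at hit
      have := (Finset.mem_inter.1 hit).2
      simp only [htoA, Finset.mem_filter, Finset.mem_univ, true_and] at this
      exact (hb i.1).1 this
    have hmemIc : ∀ i : ↥s', i ∉ I → dot b (q i) + β < 0 := by
      intro i hi
      have hit : i.1 ∉ t := by
        rw [ht]
        intro hmem
        obtain ⟨j, hj, hji⟩ := Finset.mem_image.1 hmem
        rw [Finset.mem_filter] at hj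
        exact hi (Subtype.ext hji ▸ hj.2)
      have his' : i.1 ∈ s' := i.2
      have : i.1 ∉ toA f := by
        intro hmem
        exact hit (by rw [← hsu]; exact Finset.mem_inter.2 ⟨his', hmem⟩)
      simp only [htoA, Finset.mem_filter, Finset.mem_univ, true_and] at this
      have hfalse : ¬ (0 ≤ dot b (q i) + β) := fun hle => this ((hb i.1).2 hle)
      linarith [lt_of_not_ge hfalse]
    -- convexity contradiction
    have hsub1 : q '' I ⊆ {v : Fin m → ℝ | 0 ≤ dot b v + β} := by
      rintro v ⟨i, hi, rfl⟩
      exact hmemI i hi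
    have hsub2 : q '' Iᶜ ⊆ {v : Fin m → ℝ | dot b v + β < 0} := by
      rintro v ⟨i, hi, rfl⟩
      exact hmemIc i hi
    have hp1 := convexHull_min hsub1 (convex_half_ge b β) hpI
    have hp2 := convexHull_min hsub2 (convex_half_lt b β) hpIc
    simp only [Set.mem_setOf_eq] at hp1 hp2
    linarith
  -- Sauer-Shelah
  have hγcard : Fintype.card γ = V.card := by
    rw [← Nat.card_eq_fintype_card, Nat.card_coe_set_eq, Set.ncard_coe_finset]
  calc Nat.card ↥(thrFun (↑V : Set (Fin m → ℝ))) = 𝒜.card := hcard𝒜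
    _ ≤ 𝒜.shatterer.card := Finset.card_le_card_shatterer 𝒜
    _ ≤ ∑ k ∈ Finset.Iic 𝒜.vcDim, (Fintype.card γ).choose k :=
        Finset.card_shatterer_le_sum_vcDim
    _ ≤ ∑ k ∈ Finset.Iic (m+1), (V.card).choose k := by
        rw [hγcard]
        exact Finset.sum_le_sum_of_subset (Finset.Iic_subset_Iic.2 hvc)

lemma card_le_two_pow_of_subset_cube {m : ℕ} (V : Finset (Fin m → ℝ))
    (hV : (↑V : Set (Fin m → ℝ)) ⊆ cube m) : V.card ≤ 2 ^ m := by
  classical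
  have hinj : Set.InjOn (fun x : Fin m → ℝ => fun i => decide (x i = 1)) ↑V := by
    intro x hx y hy h
    funext i
    have hxc := hV hx i
    have hyc := hV hy i
    have := congrFun h i
    simp only [decide_eq_decide] at this
    rcases hxc with hx0 | hx1 <;> rcases hyc with hy0 | hy1 <;>
      simp_all
  calc V.card = (V.image (fun x : Fin m → ℝ => fun i => decide (x i = 1))).card :=
        (Finset.card_image_of_injOn (by simpa using hinj)).symm
    _ ≤ Fintype.card (Fin m → Bool) := Finset.card_le_univ _
    _ = 2 ^ m := by simp

lemma cap_nonneg {q : ℕ} (W : Finset (Fin q → ℝ)) : 0 ≤ Cap (↑W : Set (Fin q → ℝ)) := by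
  rw [Cap]
  apply Real.logb_nonneg (by norm_num)
  have := one_le_card_thrFun (↑W : Set (Fin q → ℝ))
  exact_mod_cast this

/-- The functions computed by an `A(n, m, 1)` network on input set `S`: compositions
`ψ ∘ φ` where `φ : S → {0,1}^m` is a threshold map (each component a threshold function,
with values in `{0,1}`), and `ψ` is a threshold function on the image `φ(S)`. -/
def thrComp (n m : ℕ) (S : Set (Fin n → ℝ)) : Set (S → Bool) :=
  {g | ∃ φ : (Fin n → ℝ) → (Fin m → ℝ), ∃ ψ : (Fin m → ℝ) → Bool,
    (∀ j : Fin m, ∃ a : Fin n → ℝ, ∃ α : ℝ, ∀ x ∈ S,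
        (0 ≤ dot a x + α → φ x j = 1) ∧ (¬ 0 ≤ dot a x + α → φ x j = 0)) ∧
    (∃ b : Fin m → ℝ, ∃ β : ℝ, ∀ x ∈ S, (ψ (φ x) = true ↔ 0 ≤ dot b (φ x) + β)) ∧
    (∀ x : S, g x = ψ (φ (x : Fin n → ℝ)))}

open Classical in
/-- The `{0,1}`-valued map on `S` associated to an `m`-tuple of threshold functions. -/
noncomputable def phiOf {n : ℕ} {m : ℕ} (S : Set (Fin n → ℝ))
    (f : Fin m → ↥(thrFun S)) : ↥S → (Fin m → ℝ) :=
  fun x j => if (f j : ↥S → Bool) x = true then 1 else 0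

noncomputable def VF {n m : ℕ} (S : Set (Fin n → ℝ)) (f : Fin m → ↥(thrFun S)) :
    Set (Fin m → ℝ) := Set.range (phiOf S f)

lemma card_thrComp_le_sigma {n m : ℕ} (S : Finset (Fin n → ℝ)) :
    Nat.card ↥(thrComp n m (↑S : Set (Fin n → ℝ)))
      ≤ Nat.card (Σ f : Fin m → ↥(thrFun (↑S : Set (Fin n → ℝ))),
          ↥(thrFun (VF (↑S : Set (Fin n → ℝ)) f))) := by
  classical
  set SS := (↑S : Set (Fin n → ℝ)) with hSS
  have hch : ∀ g : ↥(thrComp n m SS), g.1 ∈ thrComp n m SS := fun g => g.2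
  simp only [thrComp, Set.mem_setOf_eq] at hch
  choose φw ψw hP1 hP2 hP3 using hch
  -- the tuple of threshold functions induced by the first layer
  have hfmem : ∀ (g : ↥(thrComp n m SS)) (j : Fin m),
      (fun x : ↥SS => decide (φw g ↑x j = 1)) ∈ thrFun SS := by
    intro g j
    obtain ⟨a, α, ha⟩ := hP1 g j
    refine ⟨a, α, fun x => ?_⟩
    constructor
    · intro hd
      by_contra hneg
      have h0 := (ha ↑x x.2).2 hneg
      rw [decide_eq_true_iff] at hd
      rw [h0] at hd
      exact one_ne_zero hd.symm
    · intro hle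
      rw [decide_eq_true_iff]
      exact (ha ↑x x.2).1 hle
  set fdef : ↥(thrComp n m SS) → (Fin m → ↥(thrFun SS)) :=
    fun g j => ⟨fun x => decide (φw g ↑x j = 1), hfmem g j⟩ with hfdef
  -- phiOf of fdef agrees with the chosen φ on S
  have hphi : ∀ (g : ↥(thrComp n m SS)) (x : ↥SS), phiOf SS (fdef g) x = φw g ↑x := by
    intro g x
    funext j
    simp only [phiOf, hfdef]
    obtain ⟨a, α, ha⟩ := hP1 g j
    rcases le_or_gt 0 (dot a ↑x + α) with h | h
    · have h1 := (ha ↑x x.2).1 h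
      simp [h1]
    · have h0 := (ha ↑x x.2).2 (not_le.2 h)
      simp [h0]
  -- the output threshold function on the image
  have hψmem : ∀ g : ↥(thrComp n m SS),
      (fun v : ↥(VF SS (fdef g)) => ψw g ↑v) ∈ thrFun (VF SS (fdef g)) := by
    intro g
    obtain ⟨b, β, hb⟩ := hP2 g
    refine ⟨b, β, fun v => ?_⟩
    obtain ⟨x, hx⟩ := v.2
    have hveq : (v : Fin m → ℝ) = φw g ↑x := by rw [← hx, hphi]
    show ψw g ↑v = true ↔ 0 ≤ dot b ↑v + β
    rw [hveq]
    exact hb ↑x x.2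
  set Θ : ↥(thrComp n m SS) → (Σ f : Fin m → ↥(thrFun SS), ↥(thrFun (VF SS f))) :=
    fun g => ⟨fdef g, ⟨fun v => ψw g ↑v, hψmem g⟩⟩ with hΘ
  set F : (Σ f : Fin m → ↥(thrFun SS), ↥(thrFun (VF SS f))) → ↥SS → Bool :=
    fun p x => p.2.1 ⟨phiOf SS p.1 x, Set.mem_range_self x⟩ with hF
  have hinj : Function.Injective Θ := by
    have hdec : ∀ g : ↥(thrComp n m SS), ∀ x : ↥SS, F (Θ g) x = g.1 x := by
      intro g x
      simp only [hΘ, hF]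
      rw [hphi]
      exact (hP3 g x).symm
    intro g₁ g₂ h
    apply Subtype.ext
    funext x
    rw [← hdec g₁ x, ← hdec g₂ x, h]
  haveI hfin : ∀ f : Fin m → ↥(thrFun SS), Finite ↥(VF SS f) :=
    fun f => (Set.finite_range (phiOf SS f)).to_subtype
  exact Nat.card_le_card_of_injective Θ hinj

lemma exists_vfin {n m : ℕ} (S : Finset (Fin n → ℝ))
    (f : Fin m → ↥(thrFun (↑S : Set (Fin n → ℝ)))) :
    ∃ V : Finset (Fin m → ℝ), (↑V : Set (Fin m → ℝ)) = VF (↑S : Set (Fin n → ℝ)) f ∧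
      (↑V : Set (Fin m → ℝ)) ⊆ cube m ∧ V.card ≤ S.card := by
  classical
  haveI : Fintype ↥(↑S : Set (Fin n → ℝ)) := FinsetCoe.fintype S
  refine ⟨Finset.image (fun x => phiOf (↑S : Set (Fin n → ℝ)) f x) Finset.univ, ?_, ?_, ?_⟩
  · rw [Finset.coe_image, Finset.coe_univ, Set.image_univ]
    rfl
  · intro v hv
    simp only [Finset.coe_image, Finset.coe_univ, Set.image_univ, Set.mem_range] at hv
    obtain ⟨x, rfl⟩ := hv
    intro i
    by_cases h : (f i : ↥(↑S : Set (Fin n → ℝ)) → Bool) x = true <;> simp [phiOf, h]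
  · calc (Finset.image _ Finset.univ).card ≤ Finset.univ.card := Finset.card_image_le
      _ = S.card := by
          rw [Finset.card_univ, ← Nat.card_eq_fintype_card, Nat.card_coe_set_eq,
            Set.ncard_coe_finset]

lemma cap_empty (m : ℕ) : Cap (↑(∅ : Finset (Fin m → ℝ)) : Set (Fin m → ℝ)) = 0 := by
  have hE : IsEmpty ↥((↑(∅ : Finset (Fin m → ℝ))) : Set (Fin m → ℝ)) := by
    simp
  have h1 : Nat.card ↥(thrFun (↑(∅ : Finset (Fin m → ℝ)) : Set (Fin m → ℝ))) = 1 := by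
    haveI := hE
    haveI : Unique (↥((↑(∅ : Finset (Fin m → ℝ))) : Set (Fin m → ℝ)) → Bool) :=
      Pi.uniqueOfIsEmpty _
    refine le_antisymm ?_ (one_le_card_thrFun _)
    calc Nat.card ↥(thrFun (↑(∅ : Finset (Fin m → ℝ)) : Set (Fin m → ℝ)))
        ≤ Nat.card (↥((↑(∅ : Finset (Fin m → ℝ))) : Set (Fin m → ℝ)) → Bool) :=
          Nat.card_le_card_of_injective _ Subtype.val_injective
      _ = 1 := Nat.card_unique
  rw [Cap, h1]
  simp

lemma thrComp_nonempty (n m : ℕ) (S : Set (Fin n → ℝ)) :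
    (fun _ : ↥S => true) ∈ thrComp n m S := by
  refine ⟨fun _ => fun _ => 1, fun _ => true, ?_, ?_, ?_⟩
  · intro j
    refine ⟨0, 0, fun x _ => ⟨fun _ => rfl, fun h => absurd (by rw [dot_zero_left]; norm_num) h⟩⟩
  · exact ⟨0, 0, fun x _ => by rw [dot_zero_left]; norm_num⟩
  · intro x; rfl

theorem stmt19 (n m : ℕ) (hn : 1 ≤ n) (hm : 1 ≤ m) (S : Finset (Fin n → ℝ)) :
    Real.logb 2 (Nat.card ↥(thrComp n m (↑S : Set (Fin n → ℝ)))) ≤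
        Cap (↑S : Set (Fin n → ℝ)) * m +
          sSup {c : ℝ | ∃ V : Finset (Fin m → ℝ),
            (↑V : Set (Fin m → ℝ)) ⊆ cube m ∧ V.card ≤ S.card ∧ c = Cap (↑V : Set (Fin m → ℝ))} ∧
      (4 ≤ n → 4 ≤ m →
        Real.logb 2 (Nat.card ↥(thrComp n m (↑S : Set (Fin n → ℝ)))) ≤
          2 * Cap (↑S : Set (Fin n → ℝ)) * m) := by
  classical
  set SS := (↑S : Set (Fin n → ℝ)) with hSS
  set SetC : Set ℝ := {c : ℝ | ∃ V : Finset (Fin m → ℝ),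
      (↑V : Set (Fin m → ℝ)) ⊆ cube m ∧ V.card ≤ S.card ∧
        c = Cap (↑V : Set (Fin m → ℝ))} with hSetC
  haveI : Fintype ↥SS := FinsetCoe.fintype S
  haveI hfinVF : ∀ f : Fin m → ↥(thrFun SS), Finite ↥(VF SS f) :=
    fun f => (Set.finite_range _).to_subtype
  -- facts about SetC
  have hbddC : BddAbove SetC := by
    refine ⟨(S.card : ℝ), ?_⟩
    rintro c ⟨V, hVcube, hVcard, rfl⟩
    have hpos : (0:ℝ) < (Nat.card ↥(thrFun (↑V : Set (Fin m → ℝ))) : ℝ) := by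
      exact_mod_cast one_le_card_thrFun (↑V : Set (Fin m → ℝ))
    have h2 : (Nat.card ↥(thrFun (↑V : Set (Fin m → ℝ))) : ℝ) ≤ (2:ℝ) ^ (V.card : ℕ) := by
      exact_mod_cast card_thrFun_le_two_pow V
    calc Cap (↑V : Set (Fin m → ℝ))
        ≤ Real.logb 2 ((2:ℝ) ^ (V.card : ℕ)) :=
          (Real.logb_le_logb one_lt_two hpos (by positivity)).2 h2
      _ = (V.card : ℝ) := by
          rw [Real.logb_pow, Real.logb_self_eq_one one_lt_two, mul_one]
      _ ≤ (S.card : ℝ) := by exact_mod_cast hVcard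
  have hmemC : ∀ f : Fin m → ↥(thrFun SS), Cap (VF SS f) ∈ SetC := by
    intro f
    obtain ⟨V, hVeq, hVcube, hVcard⟩ := exists_vfin S f
    exact ⟨V, hVcube, hVcard, by rw [hVeq]⟩
  have h0C : (0:ℝ) ∈ SetC :=
    ⟨∅, by simp [cube], by simp, (cap_empty m).symm⟩
  have hApos : (0:ℝ) < (Nat.card ↥(thrFun SS) : ℝ) := by
    exact_mod_cast one_le_card_thrFun SS
  have hCpos : (0:ℝ) < (Nat.card ↥(thrComp n m SS) : ℝ) := by
    haveI : Nonempty ↥(thrComp n m SS) := ⟨⟨_, thrComp_nonempty n m SS⟩⟩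
    exact_mod_cast Nat.card_pos
  -- Part 1
  have hpart1 : Real.logb 2 (Nat.card ↥(thrComp n m SS)) ≤ Cap SS * m + sSup SetC := by
    haveI : Fintype ↥(thrFun SS) := Fintype.ofFinite _
    haveI : ∀ f : Fin m → ↥(thrFun SS), Fintype ↥(thrFun (VF SS f)) :=
      fun f => Fintype.ofFinite _
    have hcardsig : (Nat.card (Σ f : Fin m → ↥(thrFun SS), ↥(thrFun (VF SS f))) : ℝ)
        = ∑ f : Fin m → ↥(thrFun SS), (Nat.card ↥(thrFun (VF SS f)) : ℝ) := by
      rw [Nat.card_eq_fintype_card, Fintype.card_sigma]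
      push_cast
      exact Finset.sum_congr rfl fun f _ => by rw [Nat.card_eq_fintype_card]
    have hfib : ∀ f : Fin m → ↥(thrFun SS),
        (Nat.card ↥(thrFun (VF SS f)) : ℝ) ≤ (2:ℝ) ^ (sSup SetC) := by
      intro f
      have hpos : (0:ℝ) < (Nat.card ↥(thrFun (VF SS f)) : ℝ) := by
        exact_mod_cast one_le_card_thrFun (VF SS f)
      have hle : Real.logb 2 (Nat.card ↥(thrFun (VF SS f))) ≤ sSup SetC :=
        le_csSup hbddC (hmemC f)
      calc (Nat.card ↥(thrFun (VF SS f)) : ℝ)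
          = (2:ℝ) ^ Real.logb 2 (Nat.card ↥(thrFun (VF SS f))) :=
            (Real.rpow_logb two_pos (by norm_num) hpos).symm
        _ ≤ (2:ℝ) ^ sSup SetC := (Real.rpow_le_rpow_left_iff one_lt_two).2 hle
    have hchain : (Nat.card ↥(thrComp n m SS) : ℝ)
        ≤ (Nat.card ↥(thrFun SS) : ℝ) ^ m * (2:ℝ) ^ sSup SetC := by
      have h1 : (Nat.card ↥(thrComp n m SS) : ℝ)
          ≤ (Nat.card (Σ f : Fin m → ↥(thrFun SS), ↥(thrFun (VF SS f))) : ℝ) := by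
        exact_mod_cast card_thrComp_le_sigma S
      rw [hcardsig] at h1
      refine h1.trans ?_
      calc ∑ f : Fin m → ↥(thrFun SS), (Nat.card ↥(thrFun (VF SS f)) : ℝ)
          ≤ ∑ _f : Fin m → ↥(thrFun SS), (2:ℝ) ^ sSup SetC :=
            Finset.sum_le_sum (fun f _ => hfib f)
        _ = (Fintype.card (Fin m → ↥(thrFun SS)) : ℝ) * (2:ℝ) ^ sSup SetC := by
            rw [Finset.sum_const, Finset.card_univ, nsmul_eq_mul]
        _ = (Nat.card ↥(thrFun SS) : ℝ) ^ m * (2:ℝ) ^ sSup SetC := by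
            rw [Fintype.card_fun, Fintype.card_fin, Nat.card_eq_fintype_card]
            push_cast
            ring
    have hstep := (Real.logb_le_logb one_lt_two hCpos
      (by positivity)).2 hchain
    rw [Real.logb_mul (by positivity) (by positivity), Real.logb_rpow two_pos (by norm_num),
      Real.logb_pow] at hstep
    calc Real.logb 2 (Nat.card ↥(thrComp n m SS))
        ≤ (m : ℝ) * Real.logb 2 (Nat.card ↥(thrFun SS)) + sSup SetC := hstep
      _ = Cap SS * m + sSup SetC := by rw [Cap]; ring
  refine ⟨hpart1, ?_⟩
  intro h4n h4m
  -- Part 2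
  have hsup : sSup SetC ≤ Cap SS * m := by
    refine csSup_le ⟨0, h0C⟩ ?_
    rintro c ⟨V, hVcube, hVcard, rfl⟩
    rcases Nat.eq_zero_or_pos S.card with hN | hN
    · have hV0 : V = ∅ := Finset.card_eq_zero.1 (by omega)
      subst hV0
      rw [cap_empty m]
      exact mul_nonneg (cap_nonneg S) (Nat.cast_nonneg m)
    · have hK2m : V.card ≤ 2 ^ m := card_le_two_pow_of_subset_cube V hVcube
      have hcardV : Nat.card ↥(thrFun (↑V : Set (Fin m → ℝ))) ≤ (2 * S.card) ^ m := by
        rcases le_or_gt V.card 1 with hK1 | hK1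
        · have h1 := card_thrFun_le_two_pow V
          have h2 : 2 ^ V.card ≤ 2 ^ 1 := Nat.pow_le_pow_right (by norm_num) hK1
          have h2m : 2 ≤ (2 * S.card) ^ m := by
            calc 2 = 2 ^ 1 := rfl
              _ ≤ (2 * S.card) ^ 1 := Nat.pow_le_pow_left (by omega) 1
              _ ≤ (2 * S.card) ^ m := Nat.pow_le_pow_right (by omega) hm
          omega
        · have hs := card_thrFun_le_sauer m V
          have hphi := sum_choose_le_pow (K := V.card) (by omega) (m+1) (by omega)
          have hfin : V.card ^ (m+1) ≤ (2 * S.card) ^ m := by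
            rw [pow_succ]
            calc V.card ^ m * V.card ≤ S.card ^ m * 2 ^ m :=
                Nat.mul_le_mul (Nat.pow_le_pow_left hVcard m) hK2m
              _ = (2 * S.card) ^ m := by rw [← Nat.mul_pow]; ring_nf
          omega
      have hpowpos : (0:ℝ) < ((2 * S.card : ℕ) : ℝ) ^ m := by
        have : (0:ℕ) < 2 * S.card := by omega
        positivity
      have hposV : (0:ℝ) < (Nat.card ↥(thrFun (↑V : Set (Fin m → ℝ))) : ℝ) := by
        exact_mod_cast one_le_card_thrFun (↑V : Set (Fin m → ℝ))
      have hCapV : Cap (↑V : Set (Fin m → ℝ))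
          ≤ (m : ℝ) * Real.logb 2 ((2 * S.card : ℕ) : ℝ) := by
        calc Cap (↑V : Set (Fin m → ℝ))
            ≤ Real.logb 2 (((2 * S.card : ℕ) : ℝ) ^ m) :=
              (Real.logb_le_logb one_lt_two hposV (by positivity)).2 (by exact_mod_cast hcardV)
          _ = (m : ℝ) * Real.logb 2 ((2 * S.card : ℕ) : ℝ) := Real.logb_pow 2 _ m
      have hlow : Real.logb 2 ((2 * S.card : ℕ) : ℝ) ≤ Cap SS := by
        rw [Cap]
        refine (Real.logb_le_logb one_lt_two (by exact_mod_cast (by omega : 1 ≤ 2 * S.card))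
          hApos).2 ?_
        exact_mod_cast two_mul_card_le_card_thrFun S
      calc Cap (↑V : Set (Fin m → ℝ)) ≤ (m : ℝ) * Real.logb 2 ((2 * S.card : ℕ) : ℝ) := hCapV
        _ ≤ (m : ℝ) * Cap SS := by
            refine mul_le_mul_of_nonneg_left hlow (Nat.cast_nonneg m)
        _ = Cap SS * m := mul_comm _ _
  calc Real.logb 2 (Nat.card ↥(thrComp n m SS)) ≤ Cap SS * m + sSup SetC := hpart1
    _ ≤ Cap SS * m + Cap SS * m := by linarith
    _ = 2 * Cap SS * m := by ring
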